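/- arXiv:2111.05975 — 2 statements merged into one kernel-verified Lean document; each statement's English description precedes it below -/
import Mathlib

section
/- A metric space (X,d) is Bourbaki-complete if and only if the closure of every Bourbaki-bounded subset of X is compact. -/
open Metric Filter Set

/-- Iterated chain-ball: `chainBall x eps m` is the set of points joinable to `x`
by a chain of `m + 1` steps each of length `< eps`; `chainBall x eps 0` is the open
ball (corresponding to `B^1`), and `chainBall x eps m` corresponds to `B^(m+1)`. -/
def chainBall {X : Type*} [PseudoMetricSpace X] (x : X) (eps : Real) : Nat -> Set X
  | 0 => Metric.ball x eps
  | m + 1 => Set.iUnion fun y : X => Set.iUnion fun _ : y ∈ chainBall x eps m => Metric.ball y eps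

/-- `B` is Bourbaki-bounded in `X`. -/
def IsBourbakiBounded {X : Type*} [PseudoMetricSpace X] (B : Set X) : Prop :=
  ∀ ε > (0 : ℝ), ∃ m : ℕ, ∃ s : Finset X, B ⊆ ⋃ x ∈ s, chainBall x ε m

/-- A sequence is Bourbaki-Cauchy in `X`. -/
def BourbakiCauchySeq {X : Type*} [PseudoMetricSpace X] (u : ℕ → X) : Prop :=
  ∀ ε > (0 : ℝ), ∃ m n₀ : ℕ, ∃ p : X, ∀ n ≥ n₀, u n ∈ chainBall p ε m

/-- A metric space is (sequentially) Bourbaki-complete if every Bourbaki-Cauchy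
sequence has a cluster point. -/
def IsBourbakiComplete (X : Type*) [PseudoMetricSpace X] : Prop :=
  ∀ u : ℕ → X, BourbakiCauchySeq u → ∃ x : X, MapClusterPt x atTop u

/-!
Closures of chain-balls grow by one step (`closure B^m(x,ε) ⊆ B^(m+1)(x,ε)`), so closures of
Bourbaki-bounded sets are Bourbaki-bounded. Given a sequence in such a set and `ε = 1/(k+1)`, a
free ultrafilter on `ℕ` picks, among the finitely many chain-balls covering the set, one that holds
the sequence along the ultrafilter; a diagonal extraction through these choices gives a
Bourbaki-Cauchy subsequence. Hence Bourbaki-completeness makes these closures sequentially compact.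
Conversely, the range of a Bourbaki-Cauchy sequence is Bourbaki-bounded, so the sequence lives in a
compact set and clusters.
-/

section ChainBall

variable {X : Type*} [PseudoMetricSpace X] {x : X} {ε : ℝ}

lemma chainBall_mono (hε : 0 < ε) : Monotone (chainBall x ε) :=
  monotone_nat_of_le_succ fun _ _ hz => mem_biUnion hz (mem_ball_self hε)

lemma mem_chainBall_self (hε : 0 < ε) (m : ℕ) : x ∈ chainBall x ε m :=
  chainBall_mono hε m.zero_le (mem_ball_self hε)

lemma chainBall_mono_radius {ε' : ℝ} (h : ε ≤ ε') (m : ℕ) :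
    chainBall x ε m ⊆ chainBall x ε' m := by
  induction m with
  | zero => exact ball_subset_ball h
  | succ m ih => exact biUnion_mono ih fun y _ => ball_subset_ball h

lemma closure_chainBall_subset (hε : 0 < ε) (m : ℕ) :
    closure (chainBall x ε m) ⊆ chainBall x ε (m + 1) := fun z hz => by
  obtain ⟨y, hy, hzy⟩ := Metric.mem_closure_iff.mp hz ε hε
  exact mem_biUnion hy (mem_ball.mpr hzy)

end ChainBall

lemma Ultrafilter.exists_strictMono_forall_mem {U : Ultrafilter ℕ}
    (hU : (U : Filter ℕ) ≤ cofinite) {A : ℕ → Set ℕ} (hA : ∀ k, A k ∈ U) :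
    ∃ φ : ℕ → ℕ, StrictMono φ ∧ ∀ k n, k ≤ n → φ n ∈ A k := by
  have hfreq : ∀ n, ∃ᶠ i in atTop, ∀ k ∈ Iic n, i ∈ A k := fun n =>
    have hev : ∀ᶠ i in (U : Filter ℕ), ∀ k ∈ Iic n, i ∈ A k :=
      (eventually_all_finite (finite_Iic n)).mpr fun k _ => hA k
    hev.frequently.filter_mono (Nat.cofinite_eq_atTop ▸ hU)
  obtain ⟨φ, hφ, hφA⟩ := extraction_forall_of_frequently hfreq
  exact ⟨φ, hφ, fun k n hkn => hφA n k hkn⟩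

section Bourbaki

variable {X : Type*} [PseudoMetricSpace X] {B : Set X}

lemma IsBourbakiBounded.closure (hB : IsBourbakiBounded B) :
    IsBourbakiBounded (closure B) := fun ε hε => by
  obtain ⟨m, s, hs⟩ := hB ε hε
  refine ⟨m + 1, s, (closure_mono hs).trans ?_⟩
  rw [s.closure_biUnion]
  exact iUnion₂_mono fun _ _ => closure_chainBall_subset hε m

lemma BourbakiCauchySeq.isBourbakiBounded_range {u : ℕ → X} (hu : BourbakiCauchySeq u) :
    IsBourbakiBounded (range u) := fun ε hε => by
  classical
  obtain ⟨m, n₀, p, hp⟩ := hu ε hε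
  refine ⟨m, insert p ((Finset.range n₀).image u), ?_⟩
  rintro _ ⟨n, rfl⟩
  rcases le_or_gt n₀ n with hn | hn
  · exact mem_biUnion (Finset.mem_insert_self _ _) (hp n hn)
  · exact mem_biUnion (Finset.mem_insert_of_mem (Finset.mem_image_of_mem u
      (Finset.mem_range.mpr hn))) (mem_chainBall_self hε m)

lemma IsBourbakiBounded.exists_chainBall_mem {f : Ultrafilter X} (hB : IsBourbakiBounded B)
    (hBf : B ∈ f) {ε : ℝ} (hε : 0 < ε) : ∃ m p, chainBall p ε m ∈ f := by
  obtain ⟨m, s, hs⟩ := hB ε hε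
  obtain ⟨p, -, hp⟩ := (f.finite_biUnion_mem_iff s.finite_toSet).mp (f.mem_of_superset hBf hs)
  exact ⟨m, p, hp⟩

lemma IsBourbakiBounded.exists_bourbakiCauchySeq_subseq (hB : IsBourbakiBounded B)
    {u : ℕ → X} (hu : ∀ n, u n ∈ B) :
    ∃ φ : ℕ → ℕ, StrictMono φ ∧ BourbakiCauchySeq (u ∘ φ) := by
  have hBU : B ∈ (hyperfilter ℕ).map u := Ultrafilter.mem_map.mpr (univ_mem' hu)
  choose m p hmp using fun k : ℕ => hB.exists_chainBall_mem hBU (Nat.one_div_pos_of_nat (n := k))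
  obtain ⟨φ, hφ, hφA⟩ := (hyperfilter ℕ).exists_strictMono_forall_mem hyperfilter_le_cofinite hmp
  refine ⟨φ, hφ, fun ε hε => ?_⟩
  obtain ⟨k, hk⟩ := exists_nat_one_div_lt hε
  exact ⟨m k, k, p k, fun n hn => chainBall_mono_radius hk.le _ (hφA k n hn)⟩

lemma IsBourbakiComplete.isCompact_closure (hX : IsBourbakiComplete X)
    (hB : IsBourbakiBounded B) : IsCompact (closure B) := by
  refine isCompact_iff_isSeqCompact.mpr fun v hv => ?_
  obtain ⟨φ, hφ, hvφ⟩ := hB.closure.exists_bourbakiCauchySeq_subseq hv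
  obtain ⟨x, hx⟩ := hX (v ∘ φ) hvφ
  obtain ⟨ψ, hψ, hlim⟩ := hx.tendsto_subseq
  exact ⟨x, isClosed_closure.mem_of_tendsto hlim (.of_forall fun n => hv _), φ ∘ ψ,
    hφ.comp hψ, hlim⟩

lemma isBourbakiComplete_of_isCompact_closure
    (h : ∀ B : Set X, IsBourbakiBounded B → IsCompact (closure B)) : IsBourbakiComplete X :=
  fun u hu => by
    obtain ⟨x, -, hx⟩ := (h _ hu.isBourbakiBounded_range).exists_mapClusterPt (f := atTop)
      (tendsto_principal.mpr (.of_forall fun n => subset_closure (mem_range_self n)))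
    exact ⟨x, hx⟩

end Bourbaki

/-- A metric space is Bourbaki-complete iff the closure of every Bourbaki-bounded
subset is compact. -/
theorem isBourbakiComplete_iff_closure_compact (X : Type*) [MetricSpace X] :
    IsBourbakiComplete X ↔
      ∀ B : Set X, IsBourbakiBounded B → IsCompact (closure B) :=
  ⟨fun hX _ hB => hX.isCompact_closure hB, isBourbakiComplete_of_isCompact_closure⟩
end

section
/- A Banach space is Bourbaki-complete (with the metric induced by its norm) if and only if it is finite dimensional. -/
open Metric Filter Set

/-! In a real normed space a chain of `m + 1` steps of length `< ε` reaches exactly the open ball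
of radius `(m + 1) * ε`, so bounded sequences are Bourbaki-Cauchy, while in any metric space
Bourbaki-Cauchy sequences are eventually bounded. Bourbaki-completeness of a normed space therefore
says that bounded sequences have cluster points, i.e. that the space is proper, and by Riesz's
theorem this means finite-dimensional. -/

section PseudoMetricSpace

variable {X : Type*} [PseudoMetricSpace X]

lemma mem_chainBall_succ {x z : X} {ε : ℝ} {m : ℕ} :
    z ∈ chainBall x ε (m + 1) ↔ ∃ y ∈ chainBall x ε m, dist z y < ε := by
  simp only [chainBall, mem_iUnion, mem_ball, exists_prop]

lemma chainBall_subset_ball (x : X) (ε : ℝ) (m : ℕ) :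
    chainBall x ε m ⊆ ball x ((m + 1) * ε) := by
  induction m with
  | zero => simp [chainBall]
  | succ m ih =>
    intro z hz
    obtain ⟨y, hy, hzy⟩ := mem_chainBall_succ.1 hz
    have hyx : dist y x < (m + 1) * ε := ih hy
    rw [mem_ball]
    push_cast
    linarith [dist_triangle z y x]

lemma BourbakiCauchySeq.exists_eventually_mem_ball {u : ℕ → X} (hu : BourbakiCauchySeq u) :
    ∃ p r, ∀ᶠ n in atTop, u n ∈ ball p r := by
  obtain ⟨m, n₀, p, hp⟩ := hu 1 one_pos
  exact ⟨p, _, eventually_atTop.2 ⟨n₀, fun n hn => chainBall_subset_ball p 1 m (hp n hn)⟩⟩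

lemma IsBourbakiComplete.of_properSpace [ProperSpace X] : IsBourbakiComplete X := by
  intro u hu
  obtain ⟨p, r, hr⟩ := hu.exists_eventually_mem_ball
  obtain ⟨x, -, hx⟩ := (isCompact_closedBall p r).exists_clusterPt
    (tendsto_principal.2 (hr.mono fun _ hn => ball_subset_closedBall hn))
  exact ⟨x, hx⟩

end PseudoMetricSpace

section NormedSpace

open scoped Pointwise

variable {E : Type*} [NormedAddCommGroup E] [NormedSpace ℝ E]

lemma chainBall_eq_ball (x : E) {ε : ℝ} (hε : 0 < ε) (m : ℕ) :
    chainBall x ε m = ball x ((m + 1) * ε) := by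
  refine (chainBall_subset_ball x ε m).antisymm ?_
  induction m with
  | zero => simp [chainBall]
  | succ m ih =>
    intro z hz
    have hz' : z ∈ ball x ((m + 1) * ε) + ball (0 : E) ε := by
      rw [ball_add_ball (by positivity) hε, add_zero]
      convert hz using 2
      push_cast
      ring
    obtain ⟨y, hy, w, hw, rfl⟩ := hz'
    exact mem_chainBall_succ.2 ⟨y, ih hy, by simpa using hw⟩

lemma bourbakiCauchySeq_of_isBounded_range {u : ℕ → E} (hu : Bornology.IsBounded (range u)) :
    BourbakiCauchySeq u := by
  intro ε hε
  obtain ⟨R, hR⟩ := (isBounded_iff_subset_ball 0).1 hu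
  obtain ⟨m, hm⟩ := exists_nat_gt (R / ε)
  refine ⟨m, 0, 0, fun n _ => ?_⟩
  rw [chainBall_eq_ball 0 hε]
  refine ball_subset_ball ?_ (hR (mem_range_self n))
  rw [div_lt_iff₀ hε] at hm
  linarith

lemma IsBourbakiComplete.properSpace (h : IsBourbakiComplete E) : ProperSpace E := by
  refine ⟨fun x r => IsSeqCompact.isCompact fun u hu => ?_⟩
  obtain ⟨a, ha⟩ := h u <| bourbakiCauchySeq_of_isBounded_range <|
    isBounded_closedBall.subset (range_subset_iff.2 hu)
  exact ⟨a, isClosed_closedBall.mem_of_mapClusterPt ha (Eventually.of_forall hu),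
    ha.tendsto_subseq⟩

theorem isBourbakiComplete_iff_properSpace : IsBourbakiComplete E ↔ ProperSpace E :=
  ⟨IsBourbakiComplete.properSpace, fun _ => .of_properSpace⟩

end NormedSpace

theorem banach_isBourbakiComplete_iff_finiteDimensional_general
    (E : Type*) [NormedAddCommGroup E] [NormedSpace ℝ E] :
    IsBourbakiComplete E ↔ FiniteDimensional ℝ E := by
  rw [isBourbakiComplete_iff_properSpace]
  exact ⟨fun _ => .of_locallyCompactSpace ℝ, fun _ => FiniteDimensional.proper_real E⟩

/-- A Banach space is Bourbaki-complete iff it is finite dimensional. -/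
theorem banach_isBourbakiComplete_iff_finiteDimensional
    (E : Type*) [NormedAddCommGroup E] [NormedSpace ℝ E] [CompleteSpace E] :
    IsBourbakiComplete E ↔ FiniteDimensional ℝ E :=
  banach_isBourbakiComplete_iff_finiteDimensional_general E
end
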